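/- Let p, q ≥ 0 with p + q > 0, let λ > 0, and let g : ℝ → ℝ be continuous with finite limits at +∞ and −∞. Set C₋ = (1/(2λ)) ∫_{−∞}^0 e^{λy} g(y) dy, C₊ = (1/(2λ)) ∫_0^∞ e^{−λy} g(y) dy, D₋ = (2p/(p+q))·C₊ + ((q−p)/(p+q))·C₋, D₊ = ((p−q)/(p+q))·C₊ + (2q/(p+q))·C₋, and define f(x) = C₊ e^{λx} + D₊ e^{−λx} − (1/λ) ∫_0^x sinh(λ(x−y)) g(y) dy for x ≥ 0, and f(x) = C₋ e^{−λx} + D₋ e^{λx} + (1/λ) ∫_x^0 sinh(λ(x−y)) g(y) dy for x ≤ 0. Then: f is continuous on ℝ and has finite limits at +∞ and −∞; f is twice continuously differentiable on (−∞,0] and on [0,∞) separately (with one-sided derivatives at 0); λ² f(x) − f''(x) = g(x) for all x ≠ 0; p·f'(0+) = q·f'(0−); and f''(0+) = f''(0−). -/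

import Mathlib

/-!
On each half-line `f` is a variation-of-constants solution
`u x = c₁ e^{λx} + c₂ e^{-λx} - λ⁻¹ ∫₀ˣ sinh (λ(x - y)) g y dy` of `λ² u - u'' = g`, with
`(c₁, c₂) = (C₊, D₊)` on `[0, ∞)` and `(D₋, C₋)` on `(-∞, 0]`. Such a `u` is `C²` with
`u 0 = c₁ + c₂` and `u' 0 = λ (c₁ - c₂)`, so the conditions at `0` are identities between the
constants. Splitting the integral at `x` gives
`u x = (2λ)⁻¹ ∫ e^{-λ|x - y|} g y dy + (c₁ - C₊) e^{λx} + (c₂ - C₋) e^{-λx}`: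
the choice of `C₊` (resp. `C₋`) leaves only a decaying exponential at `+∞` (resp. `-∞`), and the
convolution tends to `g(±∞) / λ²` by dominated convergence.
-/

open MeasureTheory Real Filter Set Topology

lemma Continuous.exists_forall_abs_le_of_tendsto {g : ℝ → ℝ} (hg : Continuous g) {a b : ℝ}
    (ha : Tendsto g atTop (𝓝 a)) (hb : Tendsto g atBot (𝓝 b)) : ∃ M, ∀ y, |g y| ≤ M := by
  obtain ⟨M, hM⟩ := isBounded_iff_forall_norm_le.1 <|
    hg.isBounded_range_iff_isBigO_atTop_atBot.2 ⟨ha.isBigO_one ℝ, hb.isBigO_one ℝ⟩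
  exact ⟨M, fun y => hM _ (mem_range_self y)⟩

lemma tendsto_integral_mul_comp_sub {k g : ℝ → ℝ} (hk : Integrable k) (hg : Measurable g) {M : ℝ}
    (hM : ∀ y, |g y| ≤ M) {ℓ : Filter ℝ} [ℓ.IsCountablyGenerated]
    (hℓ : ∀ t, Tendsto (fun x => x - t) ℓ ℓ) {a : ℝ} (hga : Tendsto g ℓ (𝓝 a)) :
    Tendsto (fun x => ∫ t, k t * g (x - t)) ℓ (𝓝 ((∫ t, k t) * a)) := by
  rw [← integral_mul_const]
  refine tendsto_integral_filter_of_dominated_convergence (fun t => |k t| * M)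
    (Eventually.of_forall fun x => ?_) (Eventually.of_forall fun x => ae_of_all _ fun t => ?_)
    (hk.abs.mul_const M) (ae_of_all _ fun t => (hga.comp (hℓ t)).const_mul (k t))
  · exact hk.aestronglyMeasurable.mul
      (hg.comp (measurable_const.sub measurable_id)).aestronglyMeasurable
  · rw [norm_mul, Real.norm_eq_abs, Real.norm_eq_abs]
    exact mul_le_mul_of_nonneg_left (hM _) (abs_nonneg _)

section

variable {l : ℝ} {g : ℝ → ℝ} {M : ℝ}

lemma integral_exp_neg_mul_abs (hl : 0 < l) : ∫ t, exp (-(l * |t|)) = 2 / l := by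
  rw [integral_comp_abs (f := fun s => exp (-(l * s)))]
  simp only [← neg_mul]
  rw [integral_exp_mul_Ioi (neg_lt_zero.2 hl)]
  field_simp
  simp

lemma integrable_exp_neg_mul_abs (hl : 0 < l) : Integrable fun t => exp (-(l * |t|)) :=
  .of_integral_ne_zero (by rw [integral_exp_neg_mul_abs hl]; positivity)

lemma tendsto_integral_exp_neg_mul_abs_sub_mul (hl : 0 < l) (hg : Measurable g)
    (hM : ∀ y, |g y| ≤ M) {ℓ : Filter ℝ} [ℓ.IsCountablyGenerated]
    (hℓ : ∀ t, Tendsto (fun x => x - t) ℓ ℓ) {a : ℝ} (hga : Tendsto g ℓ (𝓝 a)) :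
    Tendsto (fun x => ∫ y, exp (-(l * |x - y|)) * g y) ℓ (𝓝 (2 / l * a)) := by
  rw [← integral_exp_neg_mul_abs hl]
  refine (tendsto_integral_mul_comp_sub (integrable_exp_neg_mul_abs hl) hg hM hℓ hga).congr
    fun x => ?_
  rw [← integral_sub_left_eq_self _ volume x]
  simp

lemma integrableOn_exp_mul_mul_Iic (hl : 0 < l) (hg : Continuous g) (hM : ∀ y, |g y| ≤ M)
    (x : ℝ) : IntegrableOn (fun y => exp (l * y) * g y) (Iic x) :=
  (integrableOn_exp_mul_Iic hl x).mul_bdd hg.aestronglyMeasurable (ae_of_all _ hM)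

lemma integrableOn_exp_neg_mul_mul_Ioi (hl : 0 < l) (hg : Continuous g) (hM : ∀ y, |g y| ≤ M)
    (x : ℝ) : IntegrableOn (fun y => exp (-(l * y)) * g y) (Ioi x) := by
  have h := integrableOn_exp_mul_Ioi (neg_lt_zero.2 hl) x
  simp only [neg_mul] at h
  exact h.mul_bdd hg.aestronglyMeasurable (ae_of_all _ hM)

lemma integral_exp_neg_mul_abs_sub_mul (hl : 0 < l) (hg : Continuous g) (hM : ∀ y, |g y| ≤ M)
    (x : ℝ) : ∫ y, exp (-(l * |x - y|)) * g y
      = exp (-(l * x)) * (∫ y in Iic x, exp (l * y) * g y)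
        + exp (l * x) * ∫ y in Ioi x, exp (-(l * y)) * g y := by
  have hint : Integrable fun y => exp (-(l * |x - y|)) * g y :=
    ((integrable_exp_neg_mul_abs hl).comp_sub_left x).mul_bdd hg.aestronglyMeasurable
      (ae_of_all _ hM)
  rw [← integral_add_compl measurableSet_Iic hint, compl_Iic, ← integral_const_mul,
    ← integral_const_mul]
  congr 1
  · refine setIntegral_congr_fun measurableSet_Iic fun y hy => ?_
    rw [abs_of_nonneg (sub_nonneg.2 hy), ← mul_assoc, ← exp_add]
    ring_nf
  · refine setIntegral_congr_fun measurableSet_Ioi fun y hy => ?_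
    rw [abs_of_neg (sub_neg.2 hy), ← mul_assoc, ← exp_add]
    ring_nf

noncomputable def screenedPoissonSol (l : ℝ) (g : ℝ → ℝ) (c₁ c₂ x : ℝ) : ℝ :=
  c₁ * exp (l * x) + c₂ * exp (-(l * x)) - (1 / l) * ∫ y in (0:ℝ)..x, sinh (l * (x - y)) * g y

noncomputable def screenedPoissonSolDeriv (l : ℝ) (g : ℝ → ℝ) (c₁ c₂ x : ℝ) : ℝ :=
  l * (c₁ * exp (l * x) - c₂ * exp (-(l * x)))
    - (exp (l * x) * (∫ y in (0:ℝ)..x, exp (-(l * y)) * g y)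
      + exp (-(l * x)) * ∫ y in (0:ℝ)..x, exp (l * y) * g y) / 2

lemma screenedPoissonSol_eq (hg : Continuous g) (c₁ c₂ x : ℝ) :
    screenedPoissonSol l g c₁ c₂ x = c₁ * exp (l * x) + c₂ * exp (-(l * x))
      - (exp (l * x) * (∫ y in (0:ℝ)..x, exp (-(l * y)) * g y)
        - exp (-(l * x)) * ∫ y in (0:ℝ)..x, exp (l * y) * g y) / (2 * l) := by
  have hsinh : ∀ y, sinh (l * (x - y)) * g y
      = exp (l * x) / 2 * (exp (-(l * y)) * g y) - exp (-(l * x)) / 2 * (exp (l * y) * g y) := by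
    intro y
    rw [sinh_eq, show l * (x - y) = l * x + -(l * y) by ring,
      show -(l * x + -(l * y)) = -(l * x) + l * y by ring, exp_add, exp_add]
    ring
  simp_rw [screenedPoissonSol, hsinh]
  rw [intervalIntegral.integral_sub ((by fun_prop : Continuous _).intervalIntegrable _ _)
    ((by fun_prop : Continuous _).intervalIntegrable _ _), intervalIntegral.integral_const_mul,
    intervalIntegral.integral_const_mul]
  ring

lemma hasDerivAt_screenedPoissonSol (hl : l ≠ 0) (hg : Continuous g) (c₁ c₂ x : ℝ) :
    HasDerivAt (screenedPoissonSol l g c₁ c₂) (screenedPoissonSolDeriv l g c₁ c₂ x) x := by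
  have hlin : HasDerivAt (fun x => l * x) l x := by simpa using (hasDerivAt_id x).const_mul l
  have hA := (show Continuous fun y => exp (-(l * y)) * g y by fun_prop).integral_hasStrictDerivAt
    0 x
  have hB := (show Continuous fun y => exp (l * y) * g y by fun_prop).integral_hasStrictDerivAt 0 x
  rw [show screenedPoissonSol l g c₁ c₂ = _ from funext (screenedPoissonSol_eq hg c₁ c₂)]
  refine (((hlin.exp.const_mul c₁).add (hlin.neg.exp.const_mul c₂)).sub
    (((hlin.exp.mul hA.hasDerivAt).sub (hlin.neg.exp.mul hB.hasDerivAt)).div_const (2 * l)))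
    |>.congr_deriv ?_
  simp only [screenedPoissonSolDeriv, Pi.neg_apply]
  field_simp
  ring

lemma hasDerivAt_screenedPoissonSolDeriv (hg : Continuous g) (c₁ c₂ x : ℝ) :
    HasDerivAt (screenedPoissonSolDeriv l g c₁ c₂)
      (l ^ 2 * screenedPoissonSol l g c₁ c₂ x - g x) x := by
  have hlin : HasDerivAt (fun x => l * x) l x := by simpa using (hasDerivAt_id x).const_mul l
  have hA := (show Continuous fun y => exp (-(l * y)) * g y by fun_prop).integral_hasStrictDerivAt
    0 x
  have hB := (show Continuous fun y => exp (l * y) * g y by fun_prop).integral_hasStrictDerivAt 0 x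
  refine ((((hlin.exp.const_mul c₁).sub (hlin.neg.exp.const_mul c₂)).const_mul l).sub
    (((hlin.exp.mul hA.hasDerivAt).add (hlin.neg.exp.mul hB.hasDerivAt)).div_const 2))
    |>.congr_deriv ?_
  have he : exp (l * x) * exp (-(l * x)) = 1 := by rw [← exp_add]; simp
  rw [screenedPoissonSol_eq hg]
  simp only [Pi.neg_apply]
  rcases eq_or_ne l 0 with rfl | hl
  · simp
  field_simp
  linear_combination (-2 * g x) * he

lemma contDiff_screenedPoissonSol (hl : l ≠ 0) (hg : Continuous g) (c₁ c₂ : ℝ) :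
    ContDiff ℝ 2 (screenedPoissonSol l g c₁ c₂) := by
  have hd : deriv (screenedPoissonSol l g c₁ c₂) = screenedPoissonSolDeriv l g c₁ c₂ :=
    funext fun x => (hasDerivAt_screenedPoissonSol hl hg c₁ c₂ x).deriv
  have hd' : deriv (screenedPoissonSolDeriv l g c₁ c₂)
      = fun x => l ^ 2 * screenedPoissonSol l g c₁ c₂ x - g x :=
    funext fun x => (hasDerivAt_screenedPoissonSolDeriv hg c₁ c₂ x).deriv
  rw [show (2 : WithTop ℕ∞) = 1 + 1 by norm_num, contDiff_succ_iff_deriv, hd,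
    contDiff_one_iff_deriv, hd']
  refine ⟨fun x => (hasDerivAt_screenedPoissonSol hl hg c₁ c₂ x).differentiableAt, by simp,
    fun x => (hasDerivAt_screenedPoissonSolDeriv hg c₁ c₂ x).differentiableAt, ?_⟩
  exact (continuous_const.mul (continuous_iff_continuousAt.2
    fun x => (hasDerivAt_screenedPoissonSol hl hg c₁ c₂ x).continuousAt)).sub hg

lemma screenedPoissonSol_zero (c₁ c₂ : ℝ) : screenedPoissonSol l g c₁ c₂ 0 = c₁ + c₂ := by
  simp [screenedPoissonSol]

lemma screenedPoissonSolDeriv_zero (c₁ c₂ : ℝ) :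
    screenedPoissonSolDeriv l g c₁ c₂ 0 = l * (c₁ - c₂) := by
  simp [screenedPoissonSolDeriv]

lemma screenedPoissonSol_eq_integral_exp_neg_mul_abs (hl : 0 < l) (hg : Continuous g)
    (hM : ∀ y, |g y| ≤ M) (c₁ c₂ x : ℝ) :
    screenedPoissonSol l g c₁ c₂ x = 1 / (2 * l) * (∫ y, exp (-(l * |x - y|)) * g y)
      + (c₁ - 1 / (2 * l) * ∫ y in Ici 0, exp (-(l * y)) * g y) * exp (l * x)
      + (c₂ - 1 / (2 * l) * ∫ y in Iic 0, exp (l * y) * g y) * exp (-(l * x)) := by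
  rw [screenedPoissonSol_eq hg, integral_exp_neg_mul_abs_sub_mul hl hg hM,
    integral_Ici_eq_integral_Ioi,
    ← intervalIntegral.integral_Iic_sub_Iic (integrableOn_exp_mul_mul_Iic hl hg hM 0)
      (integrableOn_exp_mul_mul_Iic hl hg hM x),
    ← intervalIntegral.integral_Ioi_sub_Ioi' (integrableOn_exp_neg_mul_mul_Ioi hl hg hM 0)
      (integrableOn_exp_neg_mul_mul_Ioi hl hg hM x)]
  field_simp
  ring

lemma tendsto_screenedPoissonSol_atTop (hl : 0 < l) (hg : Continuous g) (hM : ∀ y, |g y| ≤ M)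
    {a : ℝ} (hga : Tendsto g atTop (𝓝 a)) (c₂ : ℝ) :
    Tendsto (screenedPoissonSol l g (1 / (2 * l) * ∫ y in Ici 0, exp (-(l * y)) * g y) c₂)
      atTop (𝓝 (a / l ^ 2)) := by
  set C := 1 / (2 * l) * ∫ y in Iic 0, exp (l * y) * g y
  have hconv := tendsto_integral_exp_neg_mul_abs_sub_mul hl hg.measurable hM
    (fun t => by simpa [sub_eq_add_neg] using tendsto_atTop_add_const_right _ (-t) tendsto_id) hga
  have hexp : Tendsto (fun x => exp (-(l * x))) atTop (𝓝 0) :=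
    tendsto_exp_neg_atTop_nhds_zero.comp (tendsto_id.const_mul_atTop hl)
  have h := (hconv.const_mul (1 / (2 * l))).add (hexp.const_mul (c₂ - C))
  rw [show 1 / (2 * l) * (2 / l * a) + (c₂ - C) * 0 = a / l ^ 2 by field_simp; ring] at h
  refine h.congr fun x => ?_
  rw [screenedPoissonSol_eq_integral_exp_neg_mul_abs hl hg hM, sub_self, zero_mul, add_zero]

lemma tendsto_screenedPoissonSol_atBot (hl : 0 < l) (hg : Continuous g) (hM : ∀ y, |g y| ≤ M)
    {a : ℝ} (hga : Tendsto g atBot (𝓝 a)) (c₁ : ℝ) :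
    Tendsto (screenedPoissonSol l g c₁ (1 / (2 * l) * ∫ y in Iic 0, exp (l * y) * g y))
      atBot (𝓝 (a / l ^ 2)) := by
  set C := 1 / (2 * l) * ∫ y in Ici 0, exp (-(l * y)) * g y
  have hconv := tendsto_integral_exp_neg_mul_abs_sub_mul hl hg.measurable hM
    (fun t => by simpa [sub_eq_add_neg] using tendsto_atBot_add_const_right _ (-t) tendsto_id) hga
  have hexp : Tendsto (fun x => exp (l * x)) atBot (𝓝 0) :=
    tendsto_exp_atBot.comp (tendsto_id.const_mul_atBot hl)
  have h := (hconv.const_mul (1 / (2 * l))).add (hexp.const_mul (c₁ - C))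
  rw [show 1 / (2 * l) * (2 / l * a) + (c₁ - C) * 0 = a / l ^ 2 by field_simp; ring] at h
  refine h.congr fun x => ?_
  rw [screenedPoissonSol_eq_integral_exp_neg_mul_abs hl hg hM, sub_self, zero_mul, add_zero]

end

lemma derivWithin_eqOn_of_hasDerivAt {𝕜 F : Type*} [NontriviallyNormedField 𝕜]
    [NormedAddCommGroup F] [NormedSpace 𝕜 F] {f u u' : 𝕜 → F} {s : Set 𝕜} (hs : UniqueDiffOn 𝕜 s)
    (hfu : EqOn f u s) (hu : ∀ x, HasDerivAt u (u' x) x) : EqOn (derivWithin f s) u' s :=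
  fun x hx => by
    rw [derivWithin_congr hfu (hfu hx)]
    exact (hu x).hasDerivWithinAt.derivWithin (hs x hx)

theorem stmt12 (p q : ℝ) (hpq : 0 < p + q)
    (l : ℝ) (hl : 0 < l) (g : ℝ → ℝ) (hg : Continuous g)
    (gp gm : ℝ) (hgt : Tendsto g atTop (nhds gp)) (hgb : Tendsto g atBot (nhds gm))
    (Cm Cp Dm Dp : ℝ)
    (hCm : Cm = (1 / (2 * l)) * ∫ y in Set.Iic (0:ℝ), Real.exp (l * y) * g y)
    (hCp : Cp = (1 / (2 * l)) * ∫ y in Set.Ici (0:ℝ), Real.exp (-(l * y)) * g y)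
    (hDm : Dm = (2 * p / (p + q)) * Cp + ((q - p) / (p + q)) * Cm)
    (hDp : Dp = ((p - q) / (p + q)) * Cp + (2 * q / (p + q)) * Cm)
    (f : ℝ → ℝ)
    (hfp : ∀ x ≥ (0:ℝ), f x = Cp * Real.exp (l * x) + Dp * Real.exp (-(l * x))
        - (1 / l) * ∫ y in (0:ℝ)..x, Real.sinh (l * (x - y)) * g y)
    (hfm : ∀ x ≤ (0:ℝ), f x = Cm * Real.exp (-(l * x)) + Dm * Real.exp (l * x)
        + (1 / l) * ∫ y in x..(0:ℝ), Real.sinh (l * (x - y)) * g y) :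
    Continuous f ∧
    (∃ L : ℝ, Tendsto f atTop (nhds L)) ∧ (∃ L : ℝ, Tendsto f atBot (nhds L)) ∧
    ContDiffOn ℝ 2 f (Set.Ici 0) ∧ ContDiffOn ℝ 2 f (Set.Iic 0) ∧
    (∀ x : ℝ, x ≠ 0 → l^2 * f x - deriv (deriv f) x = g x) ∧
    p * derivWithin f (Set.Ici 0) 0 = q * derivWithin f (Set.Iic 0) 0 ∧
    derivWithin (derivWithin f (Set.Ici 0)) (Set.Ici 0) 0
      = derivWithin (derivWithin f (Set.Iic 0)) (Set.Iic 0) 0 := by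
  obtain ⟨M, hM⟩ := hg.exists_forall_abs_le_of_tendsto hgt hgb
  have hfup : EqOn f (screenedPoissonSol l g Cp Dp) (Ici 0) := fun x hx => hfp x hx
  have hfum : EqOn f (screenedPoissonSol l g Dm Cm) (Iic 0) := fun x hx => by
    rw [hfm x hx, screenedPoissonSol, intervalIntegral.integral_symm]
    ring
  have hup := contDiff_screenedPoissonSol hl.ne' hg Cp Dp
  have hum := contDiff_screenedPoissonSol hl.ne' hg Dm Cm
  have hode : ∀ c₁ c₂ x, f =ᶠ[𝓝 x] screenedPoissonSol l g c₁ c₂ →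
      l ^ 2 * f x - deriv (deriv f) x = g x := fun c₁ c₂ x hfx => by
    rw [hfx.deriv.deriv_eq,
      funext fun y => (hasDerivAt_screenedPoissonSol hl.ne' hg c₁ c₂ y).deriv,
      (hasDerivAt_screenedPoissonSolDeriv hg c₁ c₂ x).deriv, hfx.eq_of_nhds]
    ring
  have h1p := derivWithin_eqOn_of_hasDerivAt (uniqueDiffOn_Ici 0) hfup
    (hasDerivAt_screenedPoissonSol hl.ne' hg Cp Dp)
  have h1m := derivWithin_eqOn_of_hasDerivAt (uniqueDiffOn_Iic 0) hfum
    (hasDerivAt_screenedPoissonSol hl.ne' hg Dm Cm)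
  have h2p := derivWithin_eqOn_of_hasDerivAt (uniqueDiffOn_Ici 0) h1p
    (hasDerivAt_screenedPoissonSolDeriv hg Cp Dp)
  have h2m := derivWithin_eqOn_of_hasDerivAt (uniqueDiffOn_Iic 0) h1m
    (hasDerivAt_screenedPoissonSolDeriv hg Dm Cm)
  refine ⟨?_, ⟨gp / l ^ 2, ?_⟩, ⟨gm / l ^ 2, ?_⟩, hup.contDiffOn.congr hfup,
    hum.contDiffOn.congr hfum, fun x hx => ?_, ?_, ?_⟩
  · rw [← continuousOn_univ, ← Iic_union_Ici (a := (0 : ℝ))]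
    exact (hum.continuous.continuousOn.congr hfum).union_of_isClosed
      (hup.continuous.continuousOn.congr hfup) isClosed_Iic isClosed_Ici
  · refine (hCp ▸ tendsto_screenedPoissonSol_atTop hl hg hM hgt Dp).congr' ?_
    filter_upwards [eventually_ge_atTop 0] with x hx using (hfup hx).symm
  · refine (hCm ▸ tendsto_screenedPoissonSol_atBot hl hg hM hgb Dm).congr' ?_
    filter_upwards [eventually_le_atBot 0] with x hx using (hfum hx).symm
  · rcases hx.lt_or_gt with hx | hx
    · exact hode Dm Cm x <|
        eventually_of_mem (Iio_mem_nhds hx) fun y hy => hfum (mem_Iic.2 hy.le)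
    · exact hode Cp Dp x <|
        eventually_of_mem (Ioi_mem_nhds hx) fun y hy => hfup (mem_Ici.2 hy.le)
  · rw [h1p self_mem_Ici, h1m self_mem_Iic, screenedPoissonSolDeriv_zero,
      screenedPoissonSolDeriv_zero, hDp, hDm]
    field_simp
    ring
  · simp only [h2p self_mem_Ici, h2m self_mem_Iic, screenedPoissonSol_zero, hDp, hDm]
    field_simp
    ring
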